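/- arXiv:0812.4057 — 3 statements merged into one kernel-verified Lean document; each statement's English description precedes it below -/
import Mathlib

section
/- Suppose f : ℕ → ℕ is strictly monotone increasing and f(a_i - 2) = 2^{i-3} for all i ≥ 4, where (a_i) is the Fibonacci sequence. Then for all n in the domain considered (n a length with a_k ≤ n < a_{k+1}, k ≥ 4), (1/8) n^c < f(n) < 2 n^c, where c = log(2)/log(α) and α = (1+√5)/2. -/
/-!
Strict monotonicity squeezes `f n` between consecutive prescribed values:
`fib k - 2 ≤ n < fib (k + 2) - 2`, so `2 ^ (k - 3) ≤ f n < 2 ^ (k - 1)`.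
Binet's formula gives `φ ^ (k - 2) ≤ fib k ≤ n < fib (k + 1) ≤ φ ^ k`, and raising to the power
`c = logb φ 2` turns powers of `φ` into powers of `2`, so `2 ^ (k - 2) ≤ n ^ c < 2 ^ k`.
-/

open Real goldenRatio

lemma fib_succ_le_goldenRatio_pow (n : ℕ) : (Nat.fib (n + 1) : ℝ) ≤ φ ^ n := by
  have hψ : ψ * Nat.fib n ≤ 0 := mul_nonpos_of_nonpos_of_nonneg goldenConj_neg.le n.fib.cast_nonneg
  linarith [fib_succ_sub_goldenConj_mul_fib n]

lemma goldenRatio_pow_le_fib (n : ℕ) : φ ^ n ≤ Nat.fib (n + 2) := by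
  have hψ : -(ψ * Nat.fib n) ≤ Nat.fib n := by
    nlinarith [neg_one_lt_goldenConj, (n.fib.cast_nonneg : (0 : ℝ) ≤ _)]
  have := fib_succ_sub_goldenConj_mul_fib n
  rw [Nat.fib_add_two, Nat.cast_add]
  linarith

lemma pow_rpow_logb {b x : ℝ} (hb : 0 < b) (hb₁ : b ≠ 1) (hx : 0 < x) (j : ℕ) :
    (b ^ j) ^ logb b x = x ^ j := by
  rw [← rpow_pow_comm hb.le, rpow_logb hb hb₁ hx]

section PrescribedOnFib

variable {f : ℕ → ℕ} {n k : ℕ}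

lemma StrictMono.two_pow_le_of_fib_le (hf : StrictMono f)
    (hfib : ∀ i, 4 ≤ i → f (Nat.fib i - 2) = 2 ^ (i - 3)) (hk : 4 ≤ k) (h : Nat.fib k ≤ n) :
    2 ^ (k - 3) ≤ f n :=
  hfib k hk ▸ hf.monotone (by omega)

lemma StrictMono.lt_two_pow_of_lt_fib (hf : StrictMono f)
    (hfib : ∀ i, 4 ≤ i → f (Nat.fib i - 2) = 2 ^ (i - 3)) (hk : 3 ≤ k) (h : n < Nat.fib (k + 1)) :
    f n < 2 ^ (k - 1) := by
  have hfib_k : 2 ≤ Nat.fib k := Nat.fib_mono hk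
  have hn : n < Nat.fib (k + 2) - 2 := by rw [Nat.fib_add_two]; omega
  simpa using hfib (k + 2) (by omega) ▸ hf hn

end PrescribedOnFib

/-- Suppose `f : ℕ → ℕ` is strictly monotone increasing with `f (a_i - 2) = 2^{i-3}`
for all `i ≥ 4`, where `a` is the Fibonacci sequence. Then for every `n` lying in a range
`a_k ≤ n < a_{k+1}` with `k ≥ 4`, one has `(1/8) n^c < f n < 2 n^c`, where
`c = log 2 / log α` and `α = (1+√5)/2`. -/
theorem growth_bounds (f : ℕ → ℕ) (hf : StrictMono f)
    (hfib : ∀ i, 4 ≤ i → f (Nat.fib i - 2) = 2 ^ (i - 3))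
    (n k : ℕ) (hk : 4 ≤ k) (h1 : Nat.fib k ≤ n) (h2 : n < Nat.fib (k + 1)) :
    (1 / 8 : ℝ) * (n : ℝ) ^ (Real.log 2 / Real.log ((1 + Real.sqrt 5) / 2)) < (f n : ℝ) ∧
      (f n : ℝ) < 2 * (n : ℝ) ^ (Real.log 2 / Real.log ((1 + Real.sqrt 5) / 2)) := by
  obtain ⟨m, rfl⟩ : ∃ m, k = m + 4 := ⟨k - 4, by omega⟩
  have hf_low : (2 : ℝ) ^ (m + 1) ≤ f n := mod_cast hf.two_pow_le_of_fib_le hfib hk h1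
  have hf_high : (f n : ℝ) < 2 ^ (m + 3) := mod_cast hf.lt_two_pow_of_lt_fib hfib (by omega) h2
  have hφ_pos : 0 < φ := goldenRatio_pos
  have hφ_ne : φ ≠ 1 := one_lt_goldenRatio.ne'
  have hc : 0 < logb φ 2 := logb_pos one_lt_goldenRatio one_lt_two
  have hn : (φ ^ (m + 2) : ℝ) ≤ n :=
    (goldenRatio_pow_le_fib (m + 2)).trans (mod_cast h1)
  have hn' : (n : ℝ) < φ ^ (m + 4) :=
    lt_of_lt_of_le (mod_cast h2) (fib_succ_le_goldenRatio_pow (m + 4))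
  have hnc_low : (2 : ℝ) ^ (m + 2) ≤ (n : ℝ) ^ logb φ 2 :=
    pow_rpow_logb hφ_pos hφ_ne two_pos (m + 2) ▸ rpow_le_rpow (by positivity) hn hc.le
  have hnc_high : (n : ℝ) ^ logb φ 2 < 2 ^ (m + 4) :=
    pow_rpow_logb hφ_pos hφ_ne two_pos (m + 4) ▸ rpow_lt_rpow n.cast_nonneg hn' hc
  change (1 / 8 : ℝ) * (n : ℝ) ^ logb φ 2 < f n ∧ (f n : ℝ) < 2 * (n : ℝ) ^ logb φ 2
  constructor <;> linarith [show (2 : ℝ) ^ (m + 4) = 8 * 2 ^ (m + 1) by ring,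
    show (2 : ℝ) ^ (m + 3) = 2 * 2 ^ (m + 2) by ring]
end

section
/- Let R₁ be the subring of the endomorphism ring of the ℚ-vector space with basis the free monoid on {0,1} generated by the functionally recursive matrices s = [[1,0],[0,2s]] and t = [[0,2s],[0,2t]] (2×2 block matrices whose entries are defined recursively). Then the generator s is transcendental over ℤ, i.e., no nonzero polynomial with integer coefficients vanishes at s. -/
/-!
The tree-indexed vector space `V` over `ℚ` with basis the free monoid on two letters
(encoded as `List Bool`). The functionally recursive matrices `s = [[1,0],[0,2s]]` and
`t = [[0,2s],[0,2t]]` of the ring `R₁` act on `V = ℚ·φ ⊕ 0V ⊕ 1V` by the block recursion.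
-/

noncomputable section

abbrev V : Type := List Bool →₀ ℚ

/-- Prefixing by a letter: the embedding `V → yV`. -/
def pre (b : Bool) : V →ₗ[ℚ] V := Finsupp.lmapDomain ℚ ℚ (List.cons b)

/-- Value of `s = [[1,0],[0,2s]]` on a basis word, by recursion. -/
def S1fun : List Bool → V
  | [] => Finsupp.single [] 1
  | false :: u => Finsupp.single (false :: u) 1
  | true :: u => (2 : ℚ) • pre true (S1fun u)

/-- Value of `t = [[0,2s],[0,2t]]` on a basis word, by recursion. -/
def T1fun : List Bool → V
  | [] => 0
  | false :: _ => 0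
  | true :: u => (2 : ℚ) • (pre false (S1fun u) + pre true (T1fun u))

/-- The generator `s` of `R₁`. -/
def s1 : Module.End ℚ V := Finsupp.linearCombination ℚ S1fun

/-- The generator `t` of `R₁`. -/
def t1 : Module.End ℚ V := Finsupp.linearCombination ℚ T1fun

/-- The level-preserving operator with block form `[[e,0,0],[0,A,B],[0,C,D]]` on
`V = ℚ·φ ⊕ 0V ⊕ 1V`, written `e ⊕ [[A,B],[C,D]]`. -/
def blk (e : ℚ) (A B C D : Module.End ℚ V) : Module.End ℚ V :=
  Finsupp.linearCombination ℚ (fun w => match w with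
    | [] => Finsupp.single ([] : List Bool) e
    | false :: u => pre false (A (Finsupp.single u 1)) + pre true (C (Finsupp.single u 1))
    | true :: u => pre false (B (Finsupp.single u 1)) + pre true (D (Finsupp.single u 1)))

/-- The monomial in `s, t` given by a word (`false ↦ s`, `true ↦ t`); the empty word
gives the identity. -/
def mono1 (w : List Bool) : Module.End ℚ V :=
  (w.map (fun b => if b then t1 else s1)).prod

lemma S1fun_rep (n : ℕ) :
    S1fun (List.replicate n true) = (2:ℚ)^n • Finsupp.single (List.replicate n true) 1 := by
  induction n with
  | zero => simp [S1fun]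
  | succ n ih =>
    rw [List.replicate_succ, S1fun, ih]
    simp [pre, Finsupp.mapDomain_single, pow_succ, List.replicate_succ, mul_smul, smul_comm]
    exact mul_comm _ _

lemma s1_eigen (n : ℕ) : Module.End.HasEigenvector s1 ((2:ℚ)^n)
    (Finsupp.single (List.replicate n true) 1) := by
  constructor
  · rw [Module.End.mem_eigenspace_iff]
    rw [s1, Finsupp.linearCombination_single, one_smul, S1fun_rep]
  · simp [Finsupp.single_eq_zero]

/-- In the ring `R₁` generated by `s = [[1,0],[0,2s]]` and `t = [[0,2s],[0,2t]]`,
the generator `s` is transcendental over `ℤ`: no nonzero polynomial with integer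
coefficients vanishes at `s`. -/
theorem s_transcendental (p : Polynomial ℤ) (hp : Polynomial.aeval s1 p = 0) : p = 0 := by
  set q : Polynomial ℚ := p.map (algebraMap ℤ ℚ) with hq
  have hq0 : q = 0 := by
    apply Polynomial.eq_zero_of_infinite_isRoot
    have hroot : ∀ n : ℕ, q.IsRoot ((2:ℚ)^n) := by
      intro n
      have := Module.End.aeval_apply_of_hasEigenvector (p := q) (s1_eigen n)
      rw [Polynomial.aeval_map_algebraMap, hp] at this
      have h2 : q.eval ((2:ℚ)^n) • Finsupp.single (List.replicate n true) (1:ℚ) = 0 := by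
        simpa using this.symm
      have := (smul_eq_zero.mp h2).resolve_right (by simp [Finsupp.single_eq_zero])
      exact this
    apply Set.infinite_of_injective_forall_mem
      (f := fun n : ℕ => (2:ℚ)^n)
    · exact pow_right_injective₀ (by norm_num) (by norm_num)
    · exact hroot
  have : Function.Injective (Polynomial.map (algebraMap ℤ ℚ)) :=
    Polynomial.map_injective _ (algebraMap ℤ ℚ).injective_int
  exact this (by rw [← hq, hq0, Polynomial.map_zero])

end
end

section
/- The ring R₁ generated over ℤ by the recursive matrices s = [[1,0],[0,2s]] and t = [[0,2s],[0,2t]] is isomorphic to the free associative ring (without unit) on two generators; equivalently, the natural surjection from the free ring ℤ⟨σ,τ⟩ onto R₁ sending σ↦s, τ↦t is injective. -/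
/-!
The tree-indexed vector space `V` over `ℚ` with basis the free monoid on two letters
(encoded as `List Bool`). The functionally recursive matrices `s = [[1,0],[0,2s]]` and
`t = [[0,2s],[0,2t]]` of the ring `R₁` act on `V = ℚ·φ ⊕ 0V ⊕ 1V` by the block recursion.
-/

noncomputable section

/-!
Write `dropPrefix b` for the coordinate map of the subtree `bV`, so that an operator `f` has blocks
`dropPrefix a * f * pre b`. The `(1,1)`-block of a monomial `m` is `2^|m| m`, so monomials of
different lengths are eigenvectors of `f ↦ dropPrefix true * f * pre true` for different
eigenvalues, and only monomials of one length `n` need to be separated. Among these, `s^n` is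
the only one with nonzero `(0,0)`-block, and `s^k t u` has `(0,1)`-block `2^(|u|+1) s u`; since
`s` is injective and `|u| < n`, induction on `n` concludes.
-/

def dropPrefix (b : Bool) : Module.End ℚ V :=
  Finsupp.lcomapDomain (List.cons b) List.cons_injective

@[simp]
lemma dropPrefix_apply (b : Bool) (x : V) (u : List Bool) : dropPrefix b x u = x (b :: u) := by
  simp [dropPrefix, Finsupp.lcomapDomain, Finsupp.comapDomain_apply]

@[simp]
lemma dropPrefix_pre_self (b : Bool) (x : V) : dropPrefix b (pre b x) = x := by
  ext u
  simp [pre, Finsupp.mapDomain_apply List.cons_injective]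

@[simp]
lemma dropPrefix_pre_of_ne {b b' : Bool} (h : b ≠ b') (x : V) : dropPrefix b (pre b' x) = 0 := by
  ext u
  refine Finsupp.mapDomain_of_notMem_range x _ ?_
  rintro ⟨w, hw⟩
  exact h (List.cons.inj hw).1.symm

@[simp]
lemma dropPrefix_single_nil (b : Bool) (q : ℚ) : dropPrefix b (Finsupp.single [] q) = 0 := by
  ext u
  simp

@[simp]
lemma dropPrefix_single_cons (b b' : Bool) (u : List Bool) (q : ℚ) :
    dropPrefix b (Finsupp.single (b' :: u) q) = if b' = b then Finsupp.single u q else 0 := by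
  ext w
  split_ifs with h <;> simp [Finsupp.single_apply, h]

@[simp]
lemma s1_single (w : List Bool) (q : ℚ) : s1 (Finsupp.single w q) = q • S1fun w := by
  simp [s1]

@[simp]
lemma t1_single (w : List Bool) (q : ℚ) : t1 (Finsupp.single w q) = q • T1fun w := by
  simp [t1]

@[simp]
lemma pre_single (b : Bool) (u : List Bool) (q : ℚ) :
    pre b (Finsupp.single u q) = Finsupp.single (b :: u) q := by
  simp [pre, Finsupp.mapDomain_single]

lemma dropPrefix_mul_pre_self (b : Bool) : dropPrefix b * pre b = 1 :=
  LinearMap.ext (dropPrefix_pre_self b)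

lemma dropPrefix_mul_pre_of_ne {b b' : Bool} (h : b ≠ b') : dropPrefix b * pre b' = 0 :=
  LinearMap.ext (dropPrefix_pre_of_ne h)

-- The rows of the block forms `s = [[1,0],[0,2s]]` and `t = [[0,2s],[0,2t]]`.
lemma dropPrefix_false_mul_s1 : dropPrefix false * s1 = dropPrefix false := by
  refine Finsupp.lhom_ext fun w q => ?_
  rcases w with _ | ⟨_ | _, u⟩ <;> simp [S1fun]

lemma dropPrefix_true_mul_s1 : dropPrefix true * s1 = (2 : ℚ) • (s1 * dropPrefix true) := by
  refine Finsupp.lhom_ext fun w q => ?_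
  rcases w with _ | ⟨_ | _, u⟩ <;> simp [S1fun, smul_comm q]

lemma dropPrefix_false_mul_t1 : dropPrefix false * t1 = (2 : ℚ) • (s1 * dropPrefix true) := by
  refine Finsupp.lhom_ext fun w q => ?_
  rcases w with _ | ⟨_ | _, u⟩ <;> simp [T1fun, smul_comm q]

lemma dropPrefix_true_mul_t1 : dropPrefix true * t1 = (2 : ℚ) • (t1 * dropPrefix true) := by
  refine Finsupp.lhom_ext fun w q => ?_
  rcases w with _ | ⟨_ | _, u⟩ <;> simp [T1fun, smul_comm q]

lemma mono1_cons (b : Bool) (m : List Bool) :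
    mono1 (b :: m) = (if b then t1 else s1) * mono1 m := by
  simp [mono1]

lemma mono1_append (l₁ l₂ : List Bool) : mono1 (l₁ ++ l₂) = mono1 l₁ * mono1 l₂ := by
  simp [mono1]

lemma mono1_replicate_false (k : ℕ) : mono1 (List.replicate k false) = s1 ^ k := by
  simp [mono1]

lemma dropPrefix_true_mul_mono1 (m : List Bool) :
    dropPrefix true * mono1 m = (2 : ℚ) ^ m.length • (mono1 m * dropPrefix true) := by
  induction m with
  | nil => simp [mono1]
  | cons b m ih =>
    have hgen : dropPrefix true * (if b then t1 else s1) =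
        (2 : ℚ) • ((if b then t1 else s1) * dropPrefix true) := by
      cases b
      · exact dropPrefix_true_mul_s1
      · exact dropPrefix_true_mul_t1
    rw [mono1_cons, ← mul_assoc, hgen, smul_mul_assoc, mul_assoc, ih, mul_smul_comm, smul_smul,
      ← mul_assoc, List.length_cons, pow_succ']

lemma dropPrefix_false_mul_s1_pow (k : ℕ) : dropPrefix false * s1 ^ k = dropPrefix false := by
  induction k with
  | zero => simp
  | succ k ih => rw [pow_succ, ← mul_assoc, ih, dropPrefix_false_mul_s1]

lemma dropPrefix_false_mul_mono1_replicate_append (k : ℕ) (u : List Bool) :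
    dropPrefix false * mono1 (List.replicate k false ++ true :: u) =
      (2 : ℚ) ^ (u.length + 1) • (s1 * mono1 u * dropPrefix true) := by
  rw [mono1_append, mono1_replicate_false, mono1_cons, if_pos rfl, ← mul_assoc,
    dropPrefix_false_mul_s1_pow, ← mul_assoc, dropPrefix_false_mul_t1, smul_mul_assoc, mul_assoc,
    dropPrefix_true_mul_mono1, mul_smul_comm, smul_smul, ← mul_assoc, pow_succ']

def block (a b : Bool) : Module.End ℚ V →ₗ[ℚ] Module.End ℚ V :=
  LinearMap.mulLeft ℚ (dropPrefix a) ∘ₗ LinearMap.mulRight ℚ (pre b)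

lemma block_apply (a b : Bool) (f : Module.End ℚ V) : block a b f = dropPrefix a * f * pre b :=
  (mul_assoc _ _ _).symm

lemma block_true_true_mono1 (m : List Bool) :
    block true true (mono1 m) = (2 : ℚ) ^ m.length • mono1 m := by
  rw [block_apply, dropPrefix_true_mul_mono1, smul_mul_assoc, mul_assoc, dropPrefix_mul_pre_self,
    mul_one]

lemma block_false_true_mono1_replicate_append (k : ℕ) (u : List Bool) :
    block false true (mono1 (List.replicate k false ++ true :: u)) =
      (2 : ℚ) ^ (u.length + 1) • (s1 * mono1 u) := by
  rw [block_apply, dropPrefix_false_mul_mono1_replicate_append, smul_mul_assoc, mul_assoc,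
    dropPrefix_mul_pre_self, mul_one]

lemma block_false_false_mono1_replicate_append (k : ℕ) (u : List Bool) :
    block false false (mono1 (List.replicate k false ++ true :: u)) = 0 := by
  rw [block_apply, dropPrefix_false_mul_mono1_replicate_append, smul_mul_assoc, mul_assoc,
    dropPrefix_mul_pre_of_ne (by decide), mul_zero, smul_zero]

lemma block_false_false_mono1_replicate (n : ℕ) :
    block false false (mono1 (List.replicate n false)) = 1 := by
  rw [block_apply, mono1_replicate_false, dropPrefix_false_mul_s1_pow, dropPrefix_mul_pre_self]

lemma S1fun_eq (w : List Bool) :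
    S1fun w = (2 : ℚ) ^ (w.takeWhile id).length • Finsupp.single w 1 := by
  induction w with
  | nil => simp [S1fun]
  | cons b w ih =>
    cases b
    · simp [S1fun]
    · simp [S1fun, ih, pow_succ']

lemma s1_apply (x : V) (w : List Bool) : s1 x w = 2 ^ (w.takeWhile id).length * x w := by
  induction x using Finsupp.induction_linear with
  | zero => simp
  | add x y hx hy => simp [hx, hy, mul_add]
  | single v q =>
    rw [s1_single, S1fun_eq]
    by_cases h : v = w <;> simp [h, mul_comm]

lemma s1_injective : Function.Injective s1 := fun x y h => Finsupp.ext fun w => by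
  have := congrArg (· w) h
  simpa [s1_apply] using this

lemma mulLeft_s1_injective : Function.Injective (LinearMap.mulLeft ℚ s1) :=
  fun _ _ h => LinearMap.ext fun x => s1_injective (LinearMap.congr_fun h x)

lemma mono1_mem_eigenspace (m : List Bool) :
    mono1 m ∈ Module.End.eigenspace (block true true) ((2 : ℚ) ^ m.length) :=
  Module.End.mem_eigenspace_iff.mpr (block_true_true_mono1 m)

lemma disjoint_span_mono1_length_lt_length_eq (n : ℕ) :
    Disjoint (Submodule.span ℚ (mono1 '' {m | m.length < n}))
      (Submodule.span ℚ (mono1 '' {m | m.length = n})) := by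
  refine ((Module.End.eigenspaces_iSupIndep (block true true) ((2 : ℚ) ^ n)).mono ?_ ?_).symm
  · rw [Submodule.span_le]
    rintro _ ⟨m, rfl, rfl⟩
    exact mono1_mem_eigenspace m
  · rw [Submodule.span_le]
    rintro _ ⟨m, hm, rfl⟩
    exact Submodule.mem_iSup_of_mem _ (Submodule.mem_iSup_of_mem
      (pow_lt_pow_right₀ one_lt_two hm).ne (mono1_mem_eigenspace m))

lemma eq_replicate_false_or_exists_eq_replicate_append (m : List Bool) :
    m = List.replicate m.length false ∨ ∃ k u, m = List.replicate k false ++ true :: u := by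
  induction m with
  | nil => simp
  | cons b m ih =>
    cases b
    · rcases ih with h | ⟨k, u, h⟩
      · exact .inl (by rw [List.length_cons, List.replicate_succ, ← h])
      · exact .inr ⟨k + 1, u, by rw [h, List.replicate_succ, List.cons_append]⟩
    · exact .inr ⟨0, m, rfl⟩

lemma setOf_length_eq (n : ℕ) :
    {m : List Bool | m.length = n} = insert (List.replicate n false)
      ((fun u => List.replicate (n - 1 - u.length) false ++ true :: u) '' {u | u.length < n}) := by
  ext m
  constructor
  · rintro (rfl : m.length = _)
    rcases eq_replicate_false_or_exists_eq_replicate_append m with h | ⟨k, u, rfl⟩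
    · exact .inl h
    · refine .inr ⟨u, ?_, by simp⟩
      simp only [Set.mem_ofPred_eq, List.length_append, List.length_replicate, List.length_cons]
      omega
  · rintro (rfl | ⟨u, hu, rfl⟩)
    · simp
    · simp at hu ⊢
      omega

lemma linearIndepOn_mono1_length_eq {n : ℕ}
    (ih : LinearIndepOn ℚ mono1 {u | u.length < n}) :
    LinearIndepOn ℚ mono1 {m | m.length = n} := by
  set g := fun u : List Bool => List.replicate (n - 1 - u.length) false ++ true :: u
  have hblock : LinearIndepOn ℚ (block false true ∘ mono1 ∘ g) {u | u.length < n} := by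
    have hscaled := (ih.map_injOn _ mulLeft_s1_injective.injOn).units_smul
      fun u => Units.mk0 (2 : ℚ) two_ne_zero ^ (u.1.length + 1)
    have hfun :
        block false true ∘ mono1 ∘ g = fun u => (2 : ℚ) ^ (u.length + 1) • (s1 * mono1 u) :=
      funext fun u => block_false_true_mono1_replicate_append _ u
    rw [hfun]
    exact hscaled
  have hker : Submodule.span ℚ (mono1 '' (g '' {u | u.length < n})) ≤
      LinearMap.ker (block false false) := by
    rw [Submodule.span_le]
    rintro _ ⟨_, ⟨u, -, rfl⟩, rfl⟩
    exact block_false_false_mono1_replicate_append _ u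
  rw [setOf_length_eq]
  refine (LinearIndepOn.image_of_comp g mono1 (hblock.of_comp _)).insert fun h => ?_
  have := hker h
  rw [LinearMap.mem_ker, block_false_false_mono1_replicate] at this
  exact one_ne_zero this

lemma linearIndepOn_mono1_length_lt (n : ℕ) : LinearIndepOn ℚ mono1 {m | m.length < n} := by
  induction n with
  | zero => simp
  | succ n ih =>
    have : {m : List Bool | m.length < n + 1} = {m | m.length < n} ∪ {m | m.length = n} := by
      ext m
      simp only [Set.mem_ofPred_eq, Set.mem_union]
      omega
    rw [this]
    exact ih.union (linearIndepOn_mono1_length_eq ih) (disjoint_span_mono1_length_lt_length_eq n)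

lemma linearIndependent_mono1 : LinearIndependent ℚ mono1 := by
  have hunion : (⋃ n, {m : List Bool | m.length < n}) = Set.univ :=
    Set.iUnion_eq_univ_iff.mpr fun m => ⟨m.length + 1, Nat.lt_succ_self _⟩
  have hmono : Monotone fun n => {m : List Bool | m.length < n} :=
    fun _ _ hab _ hm => lt_of_lt_of_le hm hab
  rw [← linearIndepOn_univ_iff, ← hunion]
  exact linearIndepOn_iUnion_of_directed hmono.directed_le linearIndepOn_mono1_length_lt

/-- The ring `R₁` generated over `ℤ` by `s = [[1,0],[0,2s]]` and `t = [[0,2s],[0,2t]]`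
is isomorphic to the free `2`-generated ring (without unit): the natural surjection
from the free ring sending `σ ↦ s`, `τ ↦ t` is injective; equivalently, the monomials
in `s, t` indexed by nonempty words are linearly independent over `ℤ`. -/
theorem R1_free :
    LinearIndependent ℤ (fun w : {l : List Bool // l ≠ []} => mono1 w.val) :=
  (linearIndependent_mono1.comp _ Subtype.val_injective).restrict_scalars' ℤ

end
end
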